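/- arXiv:2209.07388 — 2 statements merged into one kernel-verified Lean document; each statement's English description precedes it below -/
import Mathlib

section
/- Assume Hypothesis (QV). If K ≤ S is abelian and S_{Q,V}(K) ≠ 0, then K is F-conjugate to Q; in particular, for any α ∈ Iso_F(Q,K) one has S_{Q,V}(K) = ^αV. -/
open Subgroup

section Core

variable {S : Type*} [Group S]

/-- Conjugation by `s` as a homomorphism between subgroups `P` and `Q` of `S`,
when `s` conjugates `P` into `Q`. -/
def conjMap (s : S) (P Q : Subgroup S) (h : ∀ x ∈ P, s * x * s⁻¹ ∈ Q) : P →* Q where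
  toFun x := ⟨s * ↑x * s⁻¹, h x x.2⟩
  map_one' := by ext; simp
  map_mul' x y := by ext; push_cast; group

/-- The range in `S` of a homomorphism between subgroups of `S`. -/
def rngS {P Q : Subgroup S} (φ : P →* Q) : Subgroup S := (Q.subtype.comp φ).range

lemma rngS_le {P Q : Subgroup S} (φ : P →* Q) : rngS φ ≤ Q := by
  rintro x ⟨y, rfl⟩
  exact (φ y).2

/-- A fusion system on a group `S`: a collection of injective homomorphisms between
the subgroups of `S`, containing all homomorphisms induced by conjugation in `S`,
closed under composition and taking inverses of isomorphisms, and such that every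
morphism factors as an isomorphism in the system followed by an inclusion. -/
structure FusionSystem (S : Type*) [Group S] where
  Hom : ∀ P Q : Subgroup S, Set (P →* Q)
  inj : ∀ {P Q : Subgroup S} (φ : P →* Q), φ ∈ Hom P Q → Function.Injective φ
  conj_mem : ∀ (P Q : Subgroup S) (s : S) (h : ∀ x ∈ P, s * x * s⁻¹ ∈ Q),
    conjMap s P Q h ∈ Hom P Q
  comp_mem : ∀ {P Q R : Subgroup S} (φ : P →* Q) (ψ : Q →* R),
    φ ∈ Hom P Q → ψ ∈ Hom Q R → ψ.comp φ ∈ Hom P R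
  inv_mem : ∀ {P Q : Subgroup S} (e : P ≃* Q), e.toMonoidHom ∈ Hom P Q →
    e.symm.toMonoidHom ∈ Hom Q P
  factor : ∀ {P Q : Subgroup S} (φ : P →* Q) (hφ : φ ∈ Hom P Q),
    ∃ e : P ≃* rngS φ, e.toMonoidHom ∈ Hom P (rngS φ) ∧
      (Subgroup.inclusion (rngS_le φ)).comp e.toMonoidHom = φ

namespace FusionSystem

variable (F : FusionSystem S)

/-- The set of `F`-isomorphisms from `P` to `Q`. -/
def IsoF (P Q : Subgroup S) : Set (P ≃* Q) := {e | e.toMonoidHom ∈ F.Hom P Q}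

/-- Two subgroups are `F`-conjugate if they are isomorphic in `F`. -/
def FConj (P Q : Subgroup S) : Prop := ∃ e : P ≃* Q, e.toMonoidHom ∈ F.Hom P Q

/-- A subgroup `P ≤ S` is `F`-centric if `C_S(Q) ≤ Q` for every `Q` that is
`F`-conjugate to `P`. -/
def Centric (P : Subgroup S) : Prop :=
  ∀ Q : Subgroup S, F.FConj P Q → Subgroup.centralizer (Q : Set S) ≤ Q

end FusionSystem

/-- Conjugation gives a homomorphism from the normalizer of `P` to the automorphisms
of `P`. -/
def conjAut (P : Subgroup S) : (normalizer (P : Set S)) →* MulAut P where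
  toFun g :=
    { toFun := fun x => ⟨↑g * ↑x * (↑g)⁻¹, (mem_normalizer_iff.mp g.2 ↑x).mp x.2⟩
      invFun := fun x => ⟨(↑g)⁻¹ * ↑x * ↑g, by
        have := (mem_normalizer_iff.mp ((normalizer (P : Set S)).inv_mem g.2) (↑x)).mp x.2
        simpa using this⟩
      left_inv := fun x => by ext; simp [mul_assoc]
      right_inv := fun x => by ext; simp [mul_assoc]
      map_mul' := fun x y => by ext; push_cast; group }
  map_one' := by ext; simp
  map_mul' g h := by ext x; simp only [MulAut.mul_apply, MulEquiv.coe_mk, Equiv.coe_fn_mk]; push_cast; group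

namespace FusionSystem

variable (F : FusionSystem S)

/-- The group `Aut_F(P)` of `F`-automorphisms of `P`, as a subgroup of `MulAut P`. -/
def AutF (P : Subgroup S) : Subgroup (MulAut P) where
  carrier := {e | e.toMonoidHom ∈ F.Hom P P}
  one_mem' := by
    have h : ∀ x ∈ P, (1 : S) * x * (1 : S)⁻¹ ∈ P := by intro x hx; simpa using hx
    have h2 := F.conj_mem P P 1 h
    have he : conjMap (1 : S) P P h = (1 : MulAut P).toMonoidHom := by
      ext x; simp [conjMap]
    rwa [he] at h2
  mul_mem' := by
    intro a b ha hb
    have he : (a * b).toMonoidHom = a.toMonoidHom.comp b.toMonoidHom := by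
      ext x; rfl
    simp only [Set.mem_setOf_eq] at *
    rw [he]
    exact F.comp_mem _ _ hb ha
  inv_mem' := by
    intro a ha
    exact F.inv_mem a ha

end FusionSystem

/-- The inner automorphisms of (the group) `P`, as a subgroup of `MulAut P`. -/
def innAut (P : Type*) [Group P] : Subgroup (MulAut P) := (MulAut.conj : P →* MulAut P).range

lemma innAut_normal (P : Type*) [Group P] : (innAut P).Normal := by
  constructor
  rintro _ ⟨x, rfl⟩ g
  refine ⟨g x, ?_⟩
  ext y
  simp [MulAut.conj]

namespace FusionSystem

variable (F : FusionSystem S)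

/-- `Inn(P)` as a subgroup of `Aut_F(P)`. -/
def innFOf (P : Subgroup S) : Subgroup (F.AutF P) := (innAut P).subgroupOf (F.AutF P)

instance innFOf_normal (P : Subgroup S) : (F.innFOf P).Normal :=
  Subgroup.Normal.subgroupOf (innAut_normal P) _

/-- `Out_F(P) = Aut_F(P)/Inn(P)`. -/
def OutF (P : Subgroup S) : Type _ := F.AutF P ⧸ F.innFOf P

noncomputable instance (P : Subgroup S) : Group (F.OutF P) :=
  inferInstanceAs (Group (F.AutF P ⧸ F.innFOf P))

/-- The quotient map `Aut_F(P) → Out_F(P)`. -/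
def outMk (P : Subgroup S) : F.AutF P →* F.OutF P := QuotientGroup.mk' (F.innFOf P)

/-- Conjugation gives a homomorphism `N_S(P) → Aut_F(P)`. -/
def toAutF (P : Subgroup S) : (normalizer (P : Set S)) →* F.AutF P :=
  (conjAut P).codRestrict (F.AutF P) (fun g => by
    have h : ∀ x ∈ P, (↑g : S) * x * (↑g : S)⁻¹ ∈ P := fun x hx =>
      (mem_normalizer_iff.mp g.2 x).mp hx
    have h2 := F.conj_mem P P ↑g h
    have he : conjMap (↑g : S) P P h = (conjAut P g).toMonoidHom := by
      ext x; rfl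
    rw [he] at h2
    exact h2)

/-- For `K ≤ N_S(P)`, the subgroup `Out_K(P) ≤ Out_F(P)` of classes of automorphisms
induced by conjugation by elements of `K`. -/
noncomputable def outOf (P K : Subgroup S) (h : K ≤ (normalizer (P : Set S))) : Subgroup (F.OutF P) :=
  ((F.outMk P).comp ((F.toAutF P).comp (Subgroup.inclusion h))).range

/-- `Aut_S(P)` as a subgroup of `Aut_F(P)`. -/
def AutSF (P : Subgroup S) : Subgroup (F.AutF P) := (F.toAutF P).range

/-- `P` is fully automized (in `F`, at the prime `p`) if `Aut_S(P)` is a Sylow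
`p`-subgroup of `Aut_F(P)`. -/
def FullyAutomized (p : ℕ) [Fact p.Prime] (P : Subgroup S) : Prop :=
  ∃ Syl : Sylow p (F.AutF P), (Syl : Subgroup (F.AutF P)) = F.AutSF P

/-- `P` is receptive in `F` if every `F`-isomorphism `φ : Q → P` extends to the
subgroup `N_φ = {g ∈ N_S(Q) | φ ∘ c_g ∘ φ⁻¹ ∈ Aut_S(P)}`. -/
def Receptive (P : Subgroup S) : Prop :=
  ∀ (Q : Subgroup S) (φ : Q ≃* P), φ.toMonoidHom ∈ F.Hom Q P →
    ∃ N : Subgroup S,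
      (∀ g : S, g ∈ N ↔ ∃ hg : g ∈ (normalizer (Q : Set S)), ∃ h ∈ (normalizer (P : Set S)), ∀ q : Q,
        (↑(φ ⟨g * ↑q * g⁻¹, (mem_normalizer_iff.mp hg ↑q).mp q.2⟩) : S)
          = h * ↑(φ q) * h⁻¹) ∧
      ∃ ψ ∈ F.Hom N ⊤, ∀ (q : S) (hq : q ∈ Q) (hq' : q ∈ N),
        (↑(ψ ⟨q, hq'⟩) : S) = ↑(φ ⟨q, hq⟩)

/-- A fusion system is saturated if every `F`-conjugacy class of subgroups contains a
subgroup that is fully automized and receptive. -/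
def Saturated (p : ℕ) [Fact p.Prime] : Prop :=
  ∀ P : Subgroup S, ∃ P' : Subgroup S, F.FConj P P' ∧
    F.FullyAutomized p P' ∧ F.Receptive P'

end FusionSystem

end Core

section SQV

open DirectSum

variable {S : Type*} [Group S]

namespace FusionSystem

variable (F : FusionSystem S)

/-- Conjugation of `F`-automorphism groups by an `F`-isomorphism `e : Q ≃* L`:
`γ ↦ e⁻¹ ∘ γ ∘ e`. -/
def autConj {Q L : Subgroup S} (e : Q ≃* L) (he : e.toMonoidHom ∈ F.Hom Q L) :
    F.AutF L →* F.AutF Q where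
  toFun γ := ⟨(e.trans γ.1).trans e.symm, by
    have h1 : ((e.trans γ.1).trans e.symm).toMonoidHom
        = (e.symm.toMonoidHom.comp γ.1.toMonoidHom).comp e.toMonoidHom := by
      ext x; rfl
    show ((e.trans γ.1).trans e.symm).toMonoidHom ∈ F.Hom Q Q
    rw [h1]
    exact F.comp_mem _ _ he (F.comp_mem _ _ γ.2 (F.inv_mem e he))⟩
  map_one' := by
    ext x
    simp
  map_mul' a b := by
    ext x
    simp [MulAut.mul_apply]

/-- The induced homomorphism `Out_F(L) → Out_F(Q)` given by `[γ] ↦ [e⁻¹ ∘ γ ∘ e]`. -/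
def outConj {Q L : Subgroup S} (e : Q ≃* L) (he : e.toMonoidHom ∈ F.Hom Q L) :
    F.OutF L →* F.OutF Q :=
  QuotientGroup.map _ _ (F.autConj e he) (by
    intro γ hγ
    have hγ' : (γ : MulAut ↥L) ∈ innAut ↥L := hγ
    obtain ⟨x, hx⟩ := hγ'
    show (F.autConj e he) γ ∈ F.innFOf Q
    refine ⟨e.symm x, ?_⟩
    have hx' : ∀ z : L, (γ : MulAut L) z = x * z * x⁻¹ := by
      intro z
      rw [← hx]
      rfl
    ext y
    simp only [MulAut.conj_apply]
    have h2 : ((F.AutF Q).subtype ((F.autConj e he) γ)) y = e.symm ((γ : MulAut L) (e y)) := rfl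
    rw [h2, hx' (e y)]
    push_cast [map_mul, map_inv, MulEquiv.symm_apply_apply]
    ring_nf)

end FusionSystem

/-- The relative trace of an action with respect to a subgroup `K ≤ G`, given by summing
the action of a set of representatives of the left cosets of `K` in `G`. -/
noncomputable def cosetTrace {p : ℕ} {V : Type*} [AddCommGroup V] [Module (ZMod p) V]
    {G : Type*} [Group G] [Finite G] (K : Subgroup G) (σ : G →* (V →ₗ[ZMod p] V)) :
    V →ₗ[ZMod p] V :=
  haveI : Finite (G ⧸ K) := Quotient.finite _
  haveI := Fintype.ofFinite (G ⧸ K)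
  ∑ x : G ⧸ K, σ (Quotient.out x)

namespace FusionSystem

variable (F : FusionSystem S)

/-- A choice of an `F`-isomorphism `Q ≃* L` for `F`-conjugate subgroups. -/
noncomputable def chosenIso {Q L : Subgroup S} (hc : F.FConj Q L) : Q ≃* L := hc.choose

lemma chosenIso_mem {Q L : Subgroup S} (hc : F.FConj Q L) :
    (F.chosenIso hc).toMonoidHom ∈ F.Hom Q L := hc.choose_spec

end FusionSystem

/-- The conjugate `ˣL` of a subgroup. -/
def conjSub (x : S) (L : Subgroup S) : Subgroup S :=
  Subgroup.map (MulAut.conj x).toMonoidHom L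

lemma conjSub_one (L : Subgroup S) : conjSub 1 L = L := by
  ext z
  simp [conjSub, Subgroup.mem_map, MulAut.conj_apply]

lemma conjSub_mul (x y : S) (L : Subgroup S) :
    conjSub (x * y) L = conjSub x (conjSub y L) := by
  ext z
  simp only [conjSub, Subgroup.mem_map, MulEquiv.coe_toMonoidHom, MulAut.conj_apply]
  constructor
  · rintro ⟨a, ha, rfl⟩
    exact ⟨y * a * y⁻¹, ⟨a, ha, rfl⟩, by group⟩
  · rintro ⟨b, ⟨a, ha, rfl⟩, rfl⟩
    exact ⟨a, ha, by group⟩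

/-- Conjugation as an isomorphism `L ≃* ˣL = L'`. -/
def conjEquiv (r : S) (L L' : Subgroup S) (h : conjSub r L = L') : L ≃* L' :=
  (MulEquiv.subgroupMap (MulAut.conj r) L).trans (MulEquiv.subgroupCongr h)

lemma conjEquiv_mem (F : FusionSystem S) (r : S) (L L' : Subgroup S) (h : conjSub r L = L') :
    (conjEquiv r L L' h).toMonoidHom ∈ F.Hom L L' := by
  have hmem : ∀ x ∈ L, r * x * r⁻¹ ∈ L' := by
    intro x hx
    rw [← h]
    exact ⟨x, hx, rfl⟩
  have he : conjMap r L L' hmem = (conjEquiv r L L' h).toMonoidHom := by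
    ext x; rfl
  rw [← he]
  exact F.conj_mem L L' r hmem

namespace FusionSystem

variable (F : FusionSystem S) {Q₀ : Subgroup S}
variable {p : ℕ} {V : Type*} [AddCommGroup V] [Module (ZMod p) V]

/-- The action of `N_P(L)` on `V` twisted by an `F`-isomorphism `α : Q₀ ≃* L`, i.e. the
action of `N_P(L)` on `^αV` through `N_P(L) → Out_F(L) → Out_F(Q₀)`. -/
noncomputable def dpActionAt (ρ : Representation (ZMod p) (F.OutF Q₀) V)
    {L : Subgroup S} (α : Q₀ ≃* L) (hα : α.toMonoidHom ∈ F.Hom Q₀ L) (P : Subgroup S) :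
    ↥(P ⊓ (normalizer (L : Set S))) →* (V →ₗ[ZMod p] V) :=
  (((ρ : F.OutF Q₀ →* (V →ₗ[ZMod p] V)).comp (F.outConj α hα)).comp (F.outMk L)).comp
    ((F.toAutF L).comp (Subgroup.inclusion inf_le_right))

/-- The action of `N_P(L)` on `^αV` for the chosen isomorphism `α : Q₀ ≃* L`. -/
noncomputable def dpAction (ρ : Representation (ZMod p) (F.OutF Q₀) V)
    {L : Subgroup S} (hc : F.FConj Q₀ L) (P : Subgroup S) :
    ↥(P ⊓ (normalizer (L : Set S))) →* (V →ₗ[ZMod p] V) :=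
  F.dpActionAt ρ (F.chosenIso hc) (F.chosenIso_mem hc) P

variable [Finite S]

/-- The summand `V_{α,L}(P) = tr_L^{N_P(L)}(^αV)` of the Díaz–Park Mackey functor. -/
noncomputable def dpSummand (ρ : Representation (ZMod p) (F.OutF Q₀) V)
    (P : Subgroup S) {L : Subgroup S} (hc : F.FConj Q₀ L) : Submodule (ZMod p) V :=
  LinearMap.range (cosetTrace (L.subgroupOf (P ⊓ (normalizer (L : Set S)))) (F.dpAction ρ hc P))

/-- The setoid of `P`-conjugacy on the subgroups of `P` that are `F`-conjugate to `Q₀`. -/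
def dpRel (Q₀ P : Subgroup S) : Setoid {L : Subgroup S // L ≤ P ∧ F.FConj Q₀ L} where
  r L₁ L₂ := ∃ x ∈ P, conjSub x L₁.1 = L₂.1
  iseqv := by
    constructor
    · intro L
      exact ⟨1, P.one_mem, conjSub_one _⟩
    · rintro L₁ L₂ ⟨x, hx, hconj⟩
      refine ⟨x⁻¹, P.inv_mem hx, ?_⟩
      rw [← hconj, ← conjSub_mul]
      simp [conjSub_one]
    · rintro L₁ L₂ L₃ ⟨x, hx, hx'⟩ ⟨y, hy, hy'⟩
      exact ⟨y * x, P.mul_mem hy hx, by rw [conjSub_mul, hx', hy']⟩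

/-- The index set of the Díaz–Park direct sum decomposition of `S_{Q₀,V}(P)`:
`P`-conjugacy classes of subgroups of `P` that are `F`-conjugate to `Q₀`. -/
def SQVIndex (Q₀ P : Subgroup S) : Type _ := Quotient (F.dpRel Q₀ P)

/-- The chosen representative of a `P`-conjugacy class. -/
noncomputable def dpRep {Q₀ P : Subgroup S} (c : F.SQVIndex Q₀ P) : Subgroup S :=
  (Quotient.out c).1

lemma dpRep_le {Q₀ P : Subgroup S} (c : F.SQVIndex Q₀ P) : F.dpRep c ≤ P :=
  (Quotient.out c).2.1

lemma dpRep_fconj {Q₀ P : Subgroup S} (c : F.SQVIndex Q₀ P) : F.FConj Q₀ (F.dpRep c) :=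
  (Quotient.out c).2.2

/-- The value `S_{Q₀,V}(P)` of the Díaz–Park Mackey functor:
the direct sum of `tr_L^{N_P(L)}(^αV)` over the `P`-conjugacy classes of subgroups `L ≤ P`
`F`-conjugate to `Q₀` (with chosen representatives and chosen isomorphisms). -/
noncomputable abbrev SQVModule (ρ : Representation (ZMod p) (F.OutF Q₀) V) (P : Subgroup S) :
    Type _ :=
  ⨁ (c : F.SQVIndex Q₀ P), ↥(F.dpSummand ρ P (F.dpRep_fconj c))

/-- The inclusion of the summand indexed by the class `c` into `S_{Q₀,V}(P)`. -/
noncomputable def dpOf (ρ : Representation (ZMod p) (F.OutF Q₀) V) (P : Subgroup S)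
    (c : F.SQVIndex Q₀ P) :
    ↥(F.dpSummand ρ P (F.dpRep_fconj c)) →ₗ[ZMod p] F.SQVModule ρ P :=
  letI := Classical.decEq (F.SQVIndex Q₀ P)
  DirectSum.lof (ZMod p) (F.SQVIndex Q₀ P) (fun c => ↥(F.dpSummand ρ P (F.dpRep_fconj c))) c

/-- The component of an element of `S_{Q₀,V}(P)` at the class `c`, as an element of `V`. -/
noncomputable def dpComp {ρ : Representation (ZMod p) (F.OutF Q₀) V} {P : Subgroup S}
    (x : F.SQVModule ρ P) (c : F.SQVIndex Q₀ P) : V :=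
  ((x : ⨁ (c : F.SQVIndex Q₀ P), ↥(F.dpSummand ρ P (F.dpRep_fconj c))) c : V)

/-- The element `[α_{L'}⁻¹ ∘ c_r ∘ α_L] ∈ Aut_F(Q₀)` transporting between the twisted
modules `^{c_r ∘ α_L}V` and `^{α_{L'}}V`. -/
noncomputable def transport {Q₀ L L' : Subgroup S} (hc : F.FConj Q₀ L) (hc' : F.FConj Q₀ L')
    (r : S) (h : conjSub r L = L') : F.AutF Q₀ :=
  ⟨((F.chosenIso hc).trans (conjEquiv r L L' h)).trans (F.chosenIso hc').symm, by
    show (((F.chosenIso hc).trans (conjEquiv r L L' h)).trans (F.chosenIso hc').symm).toMonoidHom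
      ∈ F.Hom Q₀ Q₀
    have h1 : (((F.chosenIso hc).trans (conjEquiv r L L' h)).trans
        (F.chosenIso hc').symm).toMonoidHom
        = ((F.chosenIso hc').symm.toMonoidHom.comp (conjEquiv r L L' h).toMonoidHom).comp
          (F.chosenIso hc).toMonoidHom := by
      ext x; rfl
    rw [h1]
    exact F.comp_mem _ _ (F.chosenIso_mem hc)
      (F.comp_mem _ _ (conjEquiv_mem F r L L' h) (F.inv_mem _ (F.chosenIso_mem hc')))⟩

/-- The image of `transport` in `Out_F(Q₀)`. -/
noncomputable def outTransport {Q₀ L L' : Subgroup S} (hc : F.FConj Q₀ L)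
    (hc' : F.FConj Q₀ L') (r : S) (h : conjSub r L = L') : F.OutF Q₀ :=
  F.outMk Q₀ (F.transport hc hc' r h)

/-- The relative trace `tr_{N_T(L)}^{N_R(L)}` on `^αV`, for `T ≤ R`. -/
noncomputable def dpIndTrace (ρ : Representation (ZMod p) (F.OutF Q₀) V)
    {L : Subgroup S} (hc : F.FConj Q₀ L) (T R : Subgroup S) (hTR : T ≤ R) :
    V →ₗ[ZMod p] V :=
  cosetTrace ((T ⊓ (normalizer (L : Set S))).subgroupOf (R ⊓ (normalizer (L : Set S)))) (F.dpAction ρ hc R)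

/-- The restriction and induction maps of the Díaz–Park Mackey functor `S_{Q₀,V}`,
characterized on each direct summand by the formulas of Díaz–Park:
restriction along `T ≤ P` maps the summand of the class of `L` diagonally (via the
identifications `^{c_r∘α_L}V ≅ ^{α_{L'}}V`) into the summands of the `T`-classes of the
`P`-conjugates `L'` of `L` contained in `T`, and is zero on all other components;
induction along `T ≤ R` maps the summand of the class of `L` into the summand of the
`R`-class of `L` by the relative trace `tr_{N_T(L)}^{N_R(L)}`. -/
structure SQVMaps (ρ : Representation (ZMod p) (F.OutF Q₀) V) where
  res : ∀ {T P : Subgroup S}, T ≤ P → (F.SQVModule ρ P →ₗ[ZMod p] F.SQVModule ρ T)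
  ind : ∀ {T R : Subgroup S}, T ≤ R → (F.SQVModule ρ T →ₗ[ZMod p] F.SQVModule ρ R)
  res_spec : ∀ {T P : Subgroup S} (hTP : T ≤ P) (c : F.SQVIndex Q₀ P)
    (v : ↥(F.dpSummand ρ P (F.dpRep_fconj c))) (c' : F.SQVIndex Q₀ T)
    (r : S), r ∈ P → (h : conjSub r (F.dpRep c) = F.dpRep c') →
      F.dpComp (res hTP (F.dpOf ρ P c v)) c'
        = ρ (F.outTransport (F.dpRep_fconj c) (F.dpRep_fconj c') r h) (v : V)
  res_spec₂ : ∀ {T P : Subgroup S} (hTP : T ≤ P) (c : F.SQVIndex Q₀ P)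
    (v : ↥(F.dpSummand ρ P (F.dpRep_fconj c))) (c' : F.SQVIndex Q₀ T),
      (¬ ∃ r ∈ P, conjSub r (F.dpRep c) = F.dpRep c') →
      F.dpComp (res hTP (F.dpOf ρ P c v)) c' = 0
  ind_spec : ∀ {T R : Subgroup S} (hTR : T ≤ R) (c : F.SQVIndex Q₀ T)
    (v : ↥(F.dpSummand ρ T (F.dpRep_fconj c))) (c' : F.SQVIndex Q₀ R)
    (r : S), r ∈ R → (h : conjSub r (F.dpRep c) = F.dpRep c') →
      F.dpComp (ind hTR (F.dpOf ρ T c v)) c'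
        = ρ (F.outTransport (F.dpRep_fconj c) (F.dpRep_fconj c') r h)
            (F.dpIndTrace ρ (F.dpRep_fconj c) T R hTR (v : V))
  ind_spec₂ : ∀ {T R : Subgroup S} (hTR : T ≤ R) (c : F.SQVIndex Q₀ T)
    (v : ↥(F.dpSummand ρ T (F.dpRep_fconj c))) (c' : F.SQVIndex Q₀ R),
      (¬ ∃ r ∈ R, conjSub r (F.dpRep c) = F.dpRep c') →
      F.dpComp (ind hTR (F.dpOf ρ T c v)) c' = 0

/-- A representation is simple (irreducible) if the module is nonzero and has no proper
nonzero invariant submodules. -/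
def IsSimpleRep (ρ : Representation (ZMod p) (F.OutF Q₀) V) : Prop :=
  Nontrivial V ∧ ∀ W : Submodule (ZMod p) V,
    (∀ (g : F.OutF Q₀), ∀ v ∈ W, ρ g v ∈ W) → W = ⊥ ∨ W = ⊤

end FusionSystem

end SQV

/-!
Since `K` is abelian, every `L ≤ K` is centralized by `K`, so `N_K(L) = K` acts trivially on
`^αV` and the relative trace `tr_L^K` is multiplication by the index `|K : L|`. In the `p`-group
`K` this index is divisible by `p` unless `L = K`, so only the summand of the class of `K` itself
can be nonzero, and that summand is all of `V`.
-/

theorem IsPGroup.dvd_index_of_ne_top {p : ℕ} [Fact p.Prime] {G : Type*} [Group G]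
    (hG : IsPGroup p G) {H : Subgroup G} [H.FiniteIndex] (hH : H ≠ ⊤) : p ∣ H.index := by
  obtain ⟨n, hn⟩ := hG.index H
  rcases n with _ | n
  · exact absurd (index_eq_one.mp (by simpa using hn)) hH
  · exact hn ▸ dvd_pow_self p n.succ_ne_zero

theorem cosetTrace_one {p : ℕ} {V : Type*} [AddCommGroup V] [Module (ZMod p) V]
    {G : Type*} [Group G] [Finite G] (K : Subgroup G) :
    cosetTrace K (1 : G →* (V →ₗ[ZMod p] V)) = (K.index : ZMod p) • 1 := by
  unfold cosetTrace
  have := Fintype.ofFinite (G ⧸ K)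
  simp only [MonoidHom.one_apply, Finset.sum_const, Finset.card_univ]
  rw [Subgroup.index, Nat.card_eq_fintype_card, Nat.cast_smul_eq_nsmul]
  congr!

namespace FusionSystem

variable {S : Type*} [Group S] (F : FusionSystem S)

theorem toAutF_eq_one_of_mem_centralizer {L : Subgroup S} (g : normalizer (L : Set S))
    (hg : (g : S) ∈ centralizer (L : Set S)) : F.toAutF L g = 1 := by
  ext y
  show (g : S) * y * (g : S)⁻¹ = y
  rw [← hg y y.2, mul_inv_cancel_right]

variable {Q₀ : Subgroup S} {p : ℕ} {V : Type*} [AddCommGroup V] [Module (ZMod p) V]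
  (ρ : Representation (ZMod p) (F.OutF Q₀) V)

theorem dpActionAt_eq_one_of_le_centralizer {L : Subgroup S} (α : Q₀ ≃* L)
    (hα : α.toMonoidHom ∈ F.Hom Q₀ L) {P : Subgroup S} (hP : P ≤ centralizer (L : Set S)) :
    F.dpActionAt ρ α hα P = 1 := by
  ext g : 1
  simp only [dpActionAt, MonoidHom.comp_apply, MonoidHom.one_apply]
  rw [F.toAutF_eq_one_of_mem_centralizer (inclusion inf_le_right g) (hP (mem_inf.mp g.2).1),
    map_one, map_one, map_one]

variable [Finite S]

theorem dpSummand_eq_range_index_smul {P L : Subgroup S} (hP : P ≤ centralizer (L : Set S))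
    (hc : F.FConj Q₀ L) :
    F.dpSummand ρ P hc =
      LinearMap.range
        (((L.subgroupOf (P ⊓ normalizer (L : Set S))).index : ZMod p) • LinearMap.id) := by
  rw [dpSummand, dpAction, F.dpActionAt_eq_one_of_le_centralizer, cosetTrace_one,
    Module.End.one_eq_id]
  exact hP

theorem exists_dpSummand_ne_bot {P : Subgroup S} [Nontrivial (F.SQVModule ρ P)] :
    ∃ c : F.SQVIndex Q₀ P, F.dpSummand ρ P (F.dpRep_fconj c) ≠ ⊥ := by
  by_contra! h
  have (c : F.SQVIndex Q₀ P) : Subsingleton (F.dpSummand ρ P (F.dpRep_fconj c)) := by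
    rw [h c]
    infer_instance
  exact not_subsingleton (F.SQVModule ρ P)
    ⟨fun a b => DFinsupp.ext fun c => Subsingleton.elim _ _⟩

theorem dpSummand_eq_top_of_isMulCommutative {K : Subgroup S} (hK : IsMulCommutative K)
    (hc : F.FConj Q₀ K) : F.dpSummand ρ K hc = ⊤ := by
  have hindex : (K.subgroupOf (K ⊓ normalizer (K : Set S))).index = 1 :=
    index_eq_one.mpr (subgroupOf_eq_top.mpr inf_le_left)
  rw [F.dpSummand_eq_range_index_smul ρ (le_centralizer K) hc, hindex, Nat.cast_one, one_smul]
  exact LinearMap.range_id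

theorem dpSummand_eq_bot_of_lt_of_isMulCommutative [Fact p.Prime] (hS : IsPGroup p S)
    {K L : Subgroup S} (hK : IsMulCommutative K) (hLK : L < K) (hc : F.FConj Q₀ L) :
    F.dpSummand ρ K hc = ⊥ := by
  have hKC : K ≤ centralizer (L : Set S) := (le_centralizer K).trans (centralizer_le hLK.le)
  have hne : L.subgroupOf (K ⊓ normalizer (L : Set S)) ≠ ⊤ := by
    rw [Ne, subgroupOf_eq_top, inf_eq_left.mpr (hKC.trans (centralizer_le_normalizer _))]
    exact hLK.not_ge
  have hindex : ((L.subgroupOf (K ⊓ normalizer (L : Set S))).index : ZMod p) = 0 :=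
    (ZMod.natCast_eq_zero_iff _ _).mpr ((hS.to_subgroup _).dvd_index_of_ne_top hne)
  rw [F.dpSummand_eq_range_index_smul ρ hKC hc, hindex, zero_smul, LinearMap.range_zero]

end FusionSystem

theorem abelian_SQV_nonzero_implies_conjugate_general (p : ℕ) [Fact p.Prime]
    {S : Type*} [Group S] [Finite S] (hS : IsPGroup p S)
    (F : FusionSystem S)
    (Q₀ : Subgroup S)
    (V : Type*) [AddCommGroup V] [Module (ZMod p) V]
    (ρ : Representation (ZMod p) (F.OutF Q₀) V)
    (K : Subgroup S) (hK : IsMulCommutative K)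
    (hSK : Nontrivial (F.SQVModule ρ K)) :
    F.FConj Q₀ K ∧
    (∀ hc : F.FConj Q₀ K, F.dpSummand ρ K hc = ⊤) ∧
    (∀ c : F.SQVIndex Q₀ K, F.dpRep c ≠ K →
      F.dpSummand ρ K (F.dpRep_fconj c) = ⊥) := by
  have hbot (c : F.SQVIndex Q₀ K) (hcK : F.dpRep c ≠ K) :
      F.dpSummand ρ K (F.dpRep_fconj c) = ⊥ :=
    F.dpSummand_eq_bot_of_lt_of_isMulCommutative ρ hS hK
      (lt_of_le_of_ne (F.dpRep_le c) hcK) (F.dpRep_fconj c)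
  obtain ⟨c, hc⟩ := F.exists_dpSummand_ne_bot ρ (P := K)
  have hcK : F.dpRep c = K := by_contra fun hcK => hc (hbot c hcK)
  exact ⟨hcK ▸ F.dpRep_fconj c, F.dpSummand_eq_top_of_isMulCommutative ρ hK, hbot⟩

/-- Lemma 3.2: under Hypothesis (QV) (`p` odd, `F` saturated on the finite
`p`-group `S`, `Q` not `F`-centric, `V` a simple `𝔽_p[Out_F(Q)]`-module), if `K ≤ S` is
abelian and `S_{Q,V}(K) ≠ 0`, then `K` is `F`-conjugate to `Q`; in particular, for
`α ∈ Iso_F(Q,K)`, `S_{Q,V}(K) = ^αV`: the summand of the class of `K` itself is all of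
`V` and all other summands vanish. -/
theorem abelian_SQV_nonzero_implies_conjugate (p : ℕ) [Fact p.Prime] (hodd : Odd p)
    {S : Type*} [Group S] [Finite S] (hS : IsPGroup p S)
    (F : FusionSystem S) (hF : F.Saturated p)
    (Q₀ : Subgroup S) (hQ : ¬ F.Centric Q₀)
    (V : Type*) [AddCommGroup V] [Module (ZMod p) V]
    (ρ : Representation (ZMod p) (F.OutF Q₀) V) (hρ : F.IsSimpleRep ρ)
    (K : Subgroup S) (hK : IsMulCommutative K)
    (hSK : Nontrivial (F.SQVModule ρ K)) :
    F.FConj Q₀ K ∧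
    (∀ hc : F.FConj Q₀ K, F.dpSummand ρ K hc = ⊤) ∧
    (∀ c : F.SQVIndex Q₀ K, F.dpRep c ≠ K →
      F.dpSummand ρ K (F.dpRep_fconj c) = ⊥) :=
  abelian_SQV_nonzero_implies_conjugate_general p hS F Q₀ V ρ K hK hSK
end

section
/- Assume Hypothesis (Contra). Then Z(S) is properly contained in T, and T has order at least p^2. -/
open Subgroup

/-!
Since `P` and `R` are centric, `Z(S) ≤ C_S(P) ≤ P` and likewise `Z(S) ≤ R`, so `Z(S) ≤ T`.
If `Z(S) = T`, every subgroup `L ≤ T` indexing a summand of `S_{Q,V}(T)` is central, so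
`N_R(L) = R` acts trivially on `^αV` and the trace `tr_{N_T(L)}^{N_R(L)}` in `Ind_T^R` is
multiplication by `[R : T]`, which is divisible by `p` because `T < R` (`R` is centric and `T`
is not). Hence `Ind_T^R = 0`, a contradiction. Finally `Z(S) ≠ 1`, so `p²` divides
`|T| = |Z(S)| · [T : Z(S)]`.
-/

namespace Subgroup

variable {G : Type*} [Group G]

lemma normal_of_le_center {L : Subgroup G} (hL : L ≤ center G) : L.Normal :=
  ⟨fun x hx g => by rwa [mem_center_iff.mp (hL hx) g, mul_inv_cancel_right]⟩

lemma normalizer_eq_top_of_le_center {L : Subgroup G} (hL : L ≤ center G) :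
    normalizer (L : Set G) = ⊤ :=
  normalizer_eq_top_iff.mpr (normal_of_le_center hL)

end Subgroup

namespace IsPGroup

variable {p : ℕ} [Fact p.Prime] {G : Type*} [Group G] [Finite G]

lemma dvd_index_of_ne_top_s9 (hG : IsPGroup p G) {K : Subgroup G} (hK : K ≠ ⊤) :
    p ∣ K.index := by
  obtain ⟨n, hn⟩ := hG.index K
  have hn0 : n ≠ 0 := by
    rintro rfl
    exact hK (Subgroup.index_eq_one.mp hn)
  exact hn ▸ dvd_pow_self p hn0

lemma sq_dvd_card_of_lt (hG : IsPGroup p G) {K H : Subgroup G} [Nontrivial K] (hKH : K < H) :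
    p ^ 2 ∣ Nat.card H := by
  have hK : p ∣ Nat.card K :=
    ((hG.to_subgroup K).card_eq_or_dvd).resolve_left Finite.one_lt_card.ne'
  have hKH' : p ∣ K.relIndex H :=
    (hG.to_subgroup H).dvd_index_of_ne_top_s9
      (mt Subgroup.subgroupOf_eq_top.mp (not_le_of_gt hKH))
  rw [← Subgroup.relIndex_bot_left, ← Subgroup.relIndex_mul_relIndex ⊥ K H bot_le hKH.le,
    Subgroup.relIndex_bot_left, pow_two]
  exact mul_dvd_mul hK hKH'

end IsPGroup

lemma conjAut_eq_one_of_le_center {S : Type*} [Group S] {L : Subgroup S}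
    (hL : L ≤ Subgroup.center S) (g : normalizer (L : Set S)) : conjAut L g = 1 := by
  ext x
  exact congrArg (· * (g : S)⁻¹) (Subgroup.mem_center_iff.mp (hL x.2) g) |>.trans
    (mul_inv_cancel_right _ _)

lemma cosetTrace_eq_zero_of_forall_eq_one {p : ℕ} {V : Type*} [AddCommGroup V]
    [Module (ZMod p) V] {G : Type*} [Group G] [Finite G] (K : Subgroup G)
    {σ : G →* (V →ₗ[ZMod p] V)} (hσ : ∀ g, σ g = 1) (hK : p ∣ K.index) :
    cosetTrace K σ = 0 := by
  simp only [cosetTrace, hσ, Finset.sum_const, Finset.card_univ, ← Nat.card_eq_fintype_card]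
  have hK' : p ∣ Nat.card (G ⧸ K) := hK
  rw [← Nat.cast_smul_eq_nsmul (ZMod p), (ZMod.natCast_eq_zero_iff _ p).mpr hK', zero_smul]

namespace FusionSystem

variable {S : Type*} [Group S] (F : FusionSystem S)

lemma fconj_refl (P : Subgroup S) : F.FConj P P := by
  have hP : ∀ x ∈ P, (1 : S) * x * (1 : S)⁻¹ ∈ P := by simp
  refine ⟨MulEquiv.refl P, ?_⟩
  convert F.conj_mem P P 1 hP
  ext x
  simp [conjMap]

lemma Centric.center_le {F : FusionSystem S} {P : Subgroup S} (hP : F.Centric P) :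
    Subgroup.center S ≤ P :=
  (Subgroup.center_le_centralizer (P : Set S)).trans (hP P (F.fconj_refl P))

variable {Q₀ : Subgroup S} {p : ℕ} {V : Type*} [AddCommGroup V] [Module (ZMod p) V]
  (ρ : Representation (ZMod p) (F.OutF Q₀) V)

lemma dpAction_eq_one_of_le_center {L : Subgroup S} (hc : F.FConj Q₀ L)
    (hL : L ≤ Subgroup.center S) (X : Subgroup S) (g : ↥(X ⊓ normalizer (L : Set S))) :
    F.dpAction ρ hc X g = 1 := by
  have h1 : F.toAutF L (Subgroup.inclusion inf_le_right g) = 1 :=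
    Subtype.ext (conjAut_eq_one_of_le_center hL _)
  simp only [dpAction, dpActionAt, MonoidHom.comp_apply, h1, map_one]

variable [Finite S]

lemma dpIndTrace_eq_zero_of_le_center [Fact p.Prime] (hS : IsPGroup p S) {L T R : Subgroup S}
    (hc : F.FConj Q₀ L) (hL : L ≤ Subgroup.center S) (hTR : T < R) :
    F.dpIndTrace ρ hc T R hTR.le = 0 := by
  refine cosetTrace_eq_zero_of_forall_eq_one _ (F.dpAction_eq_one_of_le_center ρ hc hL R) ?_
  refine (hS.to_subgroup _).dvd_index_of_ne_top_s9 fun htop => ?_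
  rw [Subgroup.normalizer_eq_top_of_le_center hL, inf_top_eq, inf_top_eq,
    Subgroup.subgroupOf_eq_top] at htop
  exact hTR.not_ge htop

namespace SQVMaps

variable {F ρ} (M : F.SQVMaps ρ)

lemma ind_dpOf_eq_zero {T R : Subgroup S} (hTR : T ≤ R) (c : F.SQVIndex Q₀ T)
    (hc : F.dpIndTrace ρ (F.dpRep_fconj c) T R hTR = 0)
    (v : ↥(F.dpSummand ρ T (F.dpRep_fconj c))) : M.ind hTR (F.dpOf ρ T c v) = 0 := by
  refine DFinsupp.ext fun c' => Subtype.ext ?_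
  change F.dpComp (M.ind hTR (F.dpOf ρ T c v)) c' = 0
  by_cases hconj : ∃ r ∈ R, conjSub r (F.dpRep c) = F.dpRep c'
  · obtain ⟨r, hr, h⟩ := hconj
    rw [M.ind_spec hTR c v c' r hr h, hc, LinearMap.zero_apply, map_zero]
  · exact M.ind_spec₂ hTR c v c' hconj

lemma ind_eq_zero_of_le_center [Fact p.Prime] (hS : IsPGroup p S) {T R : Subgroup S}
    (hT : T ≤ Subgroup.center S) (hTR : T < R) : M.ind hTR.le = 0 := by
  classical
  refine DirectSum.linearMap_ext _ fun c => LinearMap.ext fun v => ?_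
  exact M.ind_dpOf_eq_zero hTR.le c
    (F.dpIndTrace_eq_zero_of_le_center ρ hS _ ((F.dpRep_le c).trans hT) hTR) v

end SQVMaps

end FusionSystem

theorem contra_center_lt_T_general
    (p : ℕ) [Fact p.Prime] {S : Type*} [Group S] [Finite S]
    (hS : IsPGroup p S) (F : FusionSystem S)
    (Q₀ : Subgroup S)
    (V : Type*) [AddCommGroup V] [Module (ZMod p) V]
    (ρ : Representation (ZMod p) (F.OutF Q₀) V)
    (M : F.SQVMaps ρ) (P R : Subgroup S) (hP : F.Centric P) (hR : F.Centric R)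
    (hT : ¬ F.Centric (P ⊓ R))
    (hcomp : (M.ind (inf_le_right : P ⊓ R ≤ R)).comp
      (M.res (inf_le_left : P ⊓ R ≤ P)) ≠ 0)
    :
    Subgroup.center S < P ⊓ R ∧ p ^ 2 ≤ Nat.card (P ⊓ R : Subgroup S) := by
  have hTR : P ⊓ R < R := inf_le_right.lt_of_ne fun h => hT (by rwa [h])
  have hZT : Subgroup.center S < P ⊓ R := by
    refine (le_inf hP.center_le hR.center_le).lt_of_not_ge fun hle => hcomp ?_
    rw [show M.ind inf_le_right = 0 from M.ind_eq_zero_of_le_center hS hle hTR,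
      LinearMap.zero_comp]
  have : Nontrivial S := by
    obtain ⟨x, -, hx⟩ := SetLike.exists_of_lt hZT
    exact nontrivial_of_ne x 1 fun h => hx (h ▸ Subgroup.one_mem _)
  have := hS.center_nontrivial
  exact ⟨hZT, Nat.le_of_dvd Nat.card_pos (hS.sq_dvd_card_of_lt hZT)⟩

/-- Lemma 3.8: under Hypothesis (Contra), `Z(S) < T` and `|T| ≥ p^2`. -/
theorem contra_center_lt_T
    (p : ℕ) [Fact p.Prime] (hodd : Odd p) {S : Type*} [Group S] [Finite S]
    (hS : IsPGroup p S) (F : FusionSystem S) (hF : F.Saturated p)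
    (Q₀ : Subgroup S) (hQ : ¬ F.Centric Q₀)
    (V : Type*) [AddCommGroup V] [Module (ZMod p) V]
    (ρ : Representation (ZMod p) (F.OutF Q₀) V) (hρ : F.IsSimpleRep ρ)
    (M : F.SQVMaps ρ) (P R : Subgroup S) (hP : F.Centric P) (hR : F.Centric R)
    (hT : ¬ F.Centric (P ⊓ R))
    (hcomp : (M.ind (inf_le_right : P ⊓ R ≤ R)).comp
      (M.res (inf_le_left : P ⊓ R ≤ P)) ≠ 0)
    :
    Subgroup.center S < P ⊓ R ∧ p ^ 2 ≤ Nat.card (P ⊓ R : Subgroup S) :=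
  contra_center_lt_T_general p hS F Q₀ V ρ M P R hP hR hT hcomp
end
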